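/- With mutually orthogonal smooth projections Pᵢ summing to 1 and i ≠ k, one has tr(Pₖ dPᵢ dPᵢ dPₖ) - tr(Pᵢ dPₖ dPₖ dPᵢ) = tr(dPᵢ dPₖ dPᵢ). -/

import Mathlib

/-- The trace of a continuous linear endomorphism. -/
noncomputable def trL {H : Type*} [NormedAddCommGroup H] [InnerProductSpace ℂ H]
    (T : H →L[ℂ] H) : ℂ :=
  LinearMap.trace ℂ H T.toLinearMap

/-- The alternation (evaluation of the 3-form built from the 3-linear expression `f`). -/
def alt3 {E : Type*} (f : E → E → E → ℂ) (u v w : E) : ℂ :=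
  f u v w - f v u w - f u w v + f v w u + f w u v - f w v u

set_option linter.unusedSectionVars false
set_option maxHeartbeats 1000000

section TrLemmas
variable {H : Type*} [NormedAddCommGroup H] [InnerProductSpace ℂ H] [FiniteDimensional ℂ H]

theorem trL_zero : trL (0 : H →L[ℂ] H) = 0 := by simp [trL]

theorem trL_add (X Y : H →L[ℂ] H) : trL (X + Y) = trL X + trL Y := by simp [trL]

theorem trL_neg (X : H →L[ℂ] H) : trL (-X) = -trL X := by simp [trL]

theorem trL_sub (X Y : H →L[ℂ] H) : trL (X - Y) = trL X - trL Y := by simp [trL]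

theorem trL_mul_comm (X Y : H →L[ℂ] H) : trL (X * Y) = trL (Y * X) := by
  simp only [trL, ContinuousLinearMap.mul_def]
  rw [ContinuousLinearMap.toLinearMap_comp, ContinuousLinearMap.toLinearMap_comp]
  exact LinearMap.trace_mul_comm ℂ _ _

theorem trL_eq {X Y : H →L[ℂ] H} (h : X = Y) : trL X = trL Y := congrArg trL h

theorem trL_eq_zero {X : H →L[ℂ] H} (h : X = 0) : trL X = 0 := by rw [h]; exact trL_zero

theorem trL_eq_add {X Y Z : H →L[ℂ] H} (h : X = Y + Z) : trL X = trL Y + trL Z := by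
  rw [h]; exact trL_add Y Z

theorem trL_eq_neg {X Y : H →L[ℂ] H} (h : X = -Y) : trL X = -trL Y := by
  rw [h]; exact trL_neg Y

end TrLemmas

section MainAlg
variable {H : Type*} [NormedAddCommGroup H] [InnerProductSpace ℂ H] [FiniteDimensional ℂ H]

theorem main_alg {ι : Type*} (PI PK : H →L[ℂ] H) (A B : ι → (H →L[ℂ] H))
    (p1 : PI*PI = PI) (p2 : PK*PK = PK) (p3 : PI*PK = 0) (p4 : PK*PI = 0)
    (r1 : ∀ d, PI*B d + A d*PK = 0) (r2 : ∀ d, PK*A d + B d*PI = 0)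
    (r3 : ∀ d, PI*A d + A d*PI = A d) (r4 : ∀ d, PK*B d + B d*PK = B d)
    (u v w : ι) :
    alt3 (fun a b c => trL (PK * A a * A b * B c)) u v w -
      alt3 (fun a b c => trL (PI * B a * B b * A c)) u v w =
    alt3 (fun a b c => trL (A a * B b * A c)) u v w := by
  set Q : H →L[ℂ] H := 1 - PI - PK with hQ
  -- zero lemmas
  have z1 : ∀ d, PI*A d*PI = 0 := fun d => by
    linear_combination (norm := noncomm_ring) PI * r3 d - p1 * A d
  have z2 : ∀ d, PK*B d*PK = 0 := fun d => by
    linear_combination (norm := noncomm_ring) PK * r4 d - p2 * B d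
  have zQI : Q*PI = 0 := by
    linear_combination (norm := noncomm_ring) hQ * PI - p1 - p4
  have zIQ : PI*Q = 0 := by
    linear_combination (norm := noncomm_ring) PI * hQ - p1 - p3
  have zQK : Q*PK = 0 := by
    linear_combination (norm := noncomm_ring) hQ * PK - p2 - p3
  have zKQ : PK*Q = 0 := by
    linear_combination (norm := noncomm_ring) PK * hQ - p2 - p4
  have zQA : ∀ d, Q*A d*Q = 0 := fun d => by
    linear_combination (norm := noncomm_ring) -(Q * r3 d * Q) + zQI * (A d*Q) + (Q*A d) * zIQ
  have zQB : ∀ d, Q*B d*Q = 0 := fun d => by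
    linear_combination (norm := noncomm_ring) -(Q * r4 d * Q) + zQK * (B d*Q) + (Q*B d) * zKQ
  have w1 : ∀ d, PI*B d*PK + PI*A d*PK = 0 := fun d => by
    linear_combination (norm := noncomm_ring) r1 d * PK + PI * r1 d - r1 d - A d * p2 - p1 * B d
  have w2 : ∀ d, PK*B d*PI + PK*A d*PI = 0 := fun d => by
    linear_combination (norm := noncomm_ring) r2 d * PI + PK * r2 d - r2 d - B d * p1 - p2 * A d
  -- (A): trL(Ax Ay Bz) = G1 x y z + G2 x y z
  have haveA : ∀ x y z, trL (A x*A y*B z) =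
      trL (PK*A x*PI*A y*Q*B z) + trL (Q*A x*PI*A y*PK*B z) := by
    intro x y z
    have sA0 : trL (A x*A y*B z) = trL (PI*A x*A y*B z) + trL (A x*PI*A y*B z) :=
      trL_eq_add (by linear_combination (norm := noncomm_ring) -(r3 x * (A y * B z)))
    have sA1 : trL (PI*A x*A y*B z) = 0 := by
      calc trL (PI*A x*A y*B z)
          = trL (PI * (PI*A x*A y*B z)) :=
            trL_eq (by linear_combination (norm := noncomm_ring) -(p1 * (A x*A y*B z)))
        _ = trL ((PI*A x*A y*B z) * PI) := trL_mul_comm _ _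
        _ = 0 := trL_eq_zero (by
            linear_combination (norm := noncomm_ring)
              (PI*A x*A y) * r2 z - (PI*A x) * r1 y * A z + z1 x * (B y*A z))
    have sA2 : trL (A x*PI*A y*B z) =
        trL (PK*A x*PI*A y*B z) + trL (Q*A x*PI*A y*B z) :=
      trL_eq_add (by
        linear_combination (norm := noncomm_ring)
            -(hQ * (A x*PI*A y*B z)) + z1 x * (A y*B z))
    have sA3 : trL (PK*A x*PI*A y*B z) =
        trL (PK*A x*PI*A y*PK*B z) + trL (PK*A x*PI*A y*Q*B z) :=
      trL_eq_add (by
        linear_combination (norm := noncomm_ring)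
            -((PK*A x*PI*A y) * hQ * B z) + (PK*A x) * z1 y * B z)
    have sA4 : trL (PK*A x*PI*A y*PK*B z) = 0 := by
      calc trL (PK*A x*PI*A y*PK*B z)
          = trL ((PK*A x*PI*A y) * (PK*B z)) := trL_eq (by noncomm_ring)
        _ = trL ((PK*B z) * (PK*A x*PI*A y)) := trL_mul_comm _ _
        _ = 0 := trL_eq_zero (by
            linear_combination (norm := noncomm_ring) z2 z * (A x*PI*A y))
    have sA5 : trL (Q*A x*PI*A y*B z) =
        trL (Q*A x*PI*A y*PK*B z) + trL (Q*A x*PI*A y*Q*B z) :=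
      trL_eq_add (by
        linear_combination (norm := noncomm_ring)
            -((Q*A x*PI*A y) * hQ * B z) + (Q*A x) * z1 y * B z)
    have sA6 : trL (Q*A x*PI*A y*Q*B z) = 0 := by
      calc trL (Q*A x*PI*A y*Q*B z)
          = trL ((Q*A x*PI*A y) * (Q*B z)) := trL_eq (by noncomm_ring)
        _ = trL ((Q*B z) * (Q*A x*PI*A y)) := trL_mul_comm _ _
        _ = 0 := trL_eq_zero (by
            linear_combination (norm := noncomm_ring) zQB z * (A x*PI*A y))
    rw [sA0, sA1, sA2, sA3, sA4, sA5, sA6]; ring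
  -- (B): trL(Bx By Az) = -G2 z x y - G1 y z x
  have haveB : ∀ x y z, trL (B x*B y*A z) =
      -trL (Q*A z*PI*A x*PK*B y) - trL (PK*A y*PI*A z*Q*B x) := by
    intro x y z
    have sB0 : trL (B x*B y*A z) = trL (PK*B x*B y*A z) + trL (B x*PK*B y*A z) :=
      trL_eq_add (by linear_combination (norm := noncomm_ring) -(r4 x * (B y * A z)))
    have sB1 : trL (PK*B x*B y*A z) = 0 := by
      calc trL (PK*B x*B y*A z)
          = trL (PK * (PK*B x*B y*A z)) :=
            trL_eq (by linear_combination (norm := noncomm_ring) -(p2 * (B x*B y*A z)))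
        _ = trL ((PK*B x*B y*A z) * PK) := trL_mul_comm _ _
        _ = 0 := trL_eq_zero (by
            linear_combination (norm := noncomm_ring)
              (PK*B x*B y) * r1 z - (PK*B x) * r2 y * B z + z2 x * (A y*B z))
    have sB2 : trL (B x*PK*B y*A z) =
        trL (PI*B x*PK*B y*A z) + trL (Q*B x*PK*B y*A z) :=
      trL_eq_add (by
        linear_combination (norm := noncomm_ring)
            -(hQ * (B x*PK*B y*A z)) + z2 x * (B y*A z))
    have sB3 : trL (PI*B x*PK*B y*A z) =
        trL (PI*B x*PK*B y*PI*A z) + trL (PI*B x*PK*B y*Q*A z) :=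
      trL_eq_add (by
        linear_combination (norm := noncomm_ring)
            -((PI*B x*PK*B y) * hQ * A z) + (PI*B x) * z2 y * A z)
    have sB4 : trL (PI*B x*PK*B y*PI*A z) = 0 := by
      calc trL (PI*B x*PK*B y*PI*A z)
          = trL ((PI*B x*PK*B y) * (PI*A z)) := trL_eq (by noncomm_ring)
        _ = trL ((PI*A z) * (PI*B x*PK*B y)) := trL_mul_comm _ _
        _ = 0 := trL_eq_zero (by
            linear_combination (norm := noncomm_ring) z1 z * (B x*PK*B y))
    have sB5 : trL (PI*B x*PK*B y*Q*A z) = -trL (Q*A z*PI*A x*PK*B y) := by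
      calc trL (PI*B x*PK*B y*Q*A z)
          = trL ((PI*B x*PK*B y) * (Q*A z)) := trL_eq (by noncomm_ring)
        _ = trL ((Q*A z) * (PI*B x*PK*B y)) := trL_mul_comm _ _
        _ = -trL (Q*A z*PI*A x*PK*B y) := trL_eq_neg (by
            linear_combination (norm := noncomm_ring) (Q*A z) * w1 x * B y)
    have sB6 : trL (Q*B x*PK*B y*A z) =
        trL (Q*B x*PK*B y*PI*A z) + trL (Q*B x*PK*B y*Q*A z) :=
      trL_eq_add (by
        linear_combination (norm := noncomm_ring)
            -((Q*B x*PK*B y) * hQ * A z) + (Q*B x) * z2 y * A z)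
    have sB7 : trL (Q*B x*PK*B y*Q*A z) = 0 := by
      calc trL (Q*B x*PK*B y*Q*A z)
          = trL ((Q*B x*PK*B y) * (Q*A z)) := trL_eq (by noncomm_ring)
        _ = trL ((Q*A z) * (Q*B x*PK*B y)) := trL_mul_comm _ _
        _ = 0 := trL_eq_zero (by
            linear_combination (norm := noncomm_ring) zQA z * (B x*PK*B y))
    have sB8 : trL (Q*B x*PK*B y*PI*A z) = -trL (PK*A y*PI*A z*Q*B x) := by
      calc trL (Q*B x*PK*B y*PI*A z)
          = trL (-((Q*B x) * (PK*A y*PI*A z))) := trL_eq (by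
            linear_combination (norm := noncomm_ring) (Q*B x) * w2 y * A z)
        _ = -trL ((Q*B x) * (PK*A y*PI*A z)) := trL_neg _
        _ = -trL ((PK*A y*PI*A z) * (Q*B x)) := by rw [trL_mul_comm]
        _ = -trL (PK*A y*PI*A z*Q*B x) := by rw [trL_eq (show (PK*A y*PI*A z) * (Q*B x) = PK*A y*PI*A z*Q*B x by noncomm_ring)]
    rw [sB0, sB1, sB2, sB3, sB4, sB5, sB6, sB7, sB8]; ring
  -- key2
  have key2 : ∀ x y z, trL (A x*A y*B z) + trL (B x*B y*A z) =
      trL (PK*A x*PI*A y*Q*B z) + trL (Q*A x*PI*A y*PK*B z)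
      - trL (Q*A z*PI*A x*PK*B y) - trL (PK*A y*PI*A z*Q*B x) := by
    intro x y z
    linear_combination haveA x y z + haveB x y z
  -- key1
  have key1 : ∀ x y z, trL (PK*A x*A y*B z) - trL (PI*B x*B y*A z) =
      -trL (B z*B x*A y) - trL (A y*A z*B x) - trL (B x*B y*A z) := by
    intro x y z
    have k10 : trL (PK*A x*A y*B z) = -trL (B x*PI*A y*B z) :=
      trL_eq_neg (by linear_combination (norm := noncomm_ring) r2 x * (A y*B z))
    have k11 : trL (B x*PI*A y*B z) = trL (B x*A y*B z) + trL (B x*A y*A z*PK) :=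
      trL_eq_add (by
        linear_combination (norm := noncomm_ring)
            (B x) * r3 y * B z - (B x*A y) * r1 z)
    have k12 : trL (B x*A y*A z*PK) = trL (PK * (B x*A y*A z)) :=
      trL_mul_comm (B x*A y*A z) PK
    have k13 : trL (PK * (B x*A y*A z)) =
        trL (B x*A y*A z) + trL (B x*B y*A z) - trL (B x*B y*A z*PI) := by
      have op13 : PK * (B x*A y*A z) = B x*A y*A z + B x*B y*A z - B x*B y*A z*PI := by
        linear_combination (norm := noncomm_ring)
          r4 x * (A y*A z) - (B x) * r2 y * A z + (B x*B y) * r3 z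
      rw [op13, trL_sub, trL_add]
    have k14 : trL (B x*B y*A z*PI) = trL (PI * (B x*B y*A z)) :=
      trL_mul_comm (B x*B y*A z) PI
    have k15 : trL (PI * (B x*B y*A z)) = trL (PI*B x*B y*A z) :=
      trL_eq (by noncomm_ring)
    have c1 : trL (B x*A y*B z) = trL (B z*B x*A y) := by
      calc trL (B x*A y*B z) = trL (B z * (B x*A y)) := trL_mul_comm (B x*A y) (B z)
        _ = trL (B z*B x*A y) := trL_eq (by noncomm_ring)
    have c2 : trL (B x*A y*A z) = trL (A y*A z*B x) := by
      calc trL (B x*A y*A z) = trL (B x * (A y*A z)) := trL_eq (by noncomm_ring)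
        _ = trL ((A y*A z) * B x) := trL_mul_comm _ _
        _ = trL (A y*A z*B x) := trL_eq (by noncomm_ring)
    linear_combination k10 - k11 - k12 - k13 + k14 + k15 - c1 - c2
  -- key3
  have key3 : ∀ x y z, trL (A x*B y*A z) = trL (A z*A x*B y) := by
    intro x y z
    calc trL (A x*B y*A z) = trL (A z * (A x*B y)) := trL_mul_comm (A x*B y) (A z)
      _ = trL (A z*A x*B y) := trL_eq (by noncomm_ring)
  simp only [alt3]
  linear_combination
    (key1 u v w - key1 v u w - key1 u w v + key1 v w u + key1 w u v - key1 w v u)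
    - (key3 u v w - key3 v u w - key3 u w v + key3 v w u + key3 w u v - key3 w v u)
    - 2*(key2 u v w - key2 v u w - key2 u w v + key2 v w u + key2 w u v - key2 w v u)

end MainAlg


section Glue
variable {E H : Type*} [NormedAddCommGroup E] [NormedSpace ℝ E]
    [NormedAddCommGroup H] [InnerProductSpace ℂ H] [FiniteDimensional ℂ H]

theorem fd_mul (f g : E → (H →L[ℂ] H)) (hf : Differentiable ℝ f)
    (hg : Differentiable ℝ g) (m d : E) :
    fderiv ℝ (fun x => f x * g x) m d = f m * fderiv ℝ g m d + fderiv ℝ f m d * g m := by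
  rw [fderiv_fun_mul' (𝕜 := ℝ) (hf m) (hg m)]
  simp [ContinuousLinearMap.smulRight_apply, ContinuousLinearMap.smul_apply, smul_eq_mul]

end Glue

/-- For smooth mutually orthogonal projections summing to `1` and `i ≠ k`,
the 3-forms satisfy `tr(Pₖ dPᵢ dPᵢ dPₖ) - tr(Pᵢ dPₖ dPₖ dPᵢ) = tr(dPᵢ dPₖ dPᵢ)`. -/
theorem three_form_difference_identity
    {E H : Type*} [NormedAddCommGroup E] [NormedSpace ℝ E]
    [NormedAddCommGroup H] [InnerProductSpace ℂ H] [FiniteDimensional ℂ H]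
    {n : ℕ} (P : Fin n → E → (H →L[ℂ] H))
    (hPdiff : ∀ i, Differentiable ℝ (P i))
    (hsa : ∀ i m, IsSelfAdjoint (P i m))
    (horth : ∀ i j m, P i m * P j m = if i = j then P i m else 0)
    (hsum : ∀ m, ∑ i, P i m = 1)
    (i k : Fin n) (hik : i ≠ k) (m : E) :
    ∀ u v w : E,
      alt3 (fun a b c => trL (P k m * (fderiv ℝ (P i) m a) * (fderiv ℝ (P i) m b) *
          (fderiv ℝ (P k) m c))) u v w -
        alt3 (fun a b c => trL (P i m * (fderiv ℝ (P k) m a) * (fderiv ℝ (P k) m b) *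
          (fderiv ℝ (P i) m c))) u v w =
      alt3 (fun a b c => trL ((fderiv ℝ (P i) m a) * (fderiv ℝ (P k) m b) *
        (fderiv ℝ (P i) m c))) u v w := by
  have mulii : ∀ x, P i x * P i x = P i x := fun x => by simpa using horth i i x
  have mulkk : ∀ x, P k x * P k x = P k x := fun x => by simpa using horth k k x
  have mulik : ∀ x, P i x * P k x = 0 := fun x => by simpa [hik] using horth i k x
  have mulki : ∀ x, P k x * P i x = 0 := fun x => by simpa [Ne.symm hik] using horth k i x
  have r1 : ∀ d, P i m * fderiv ℝ (P k) m d + fderiv ℝ (P i) m d * P k m = 0 := by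
    intro d
    rw [← fd_mul (P i) (P k) (hPdiff i) (hPdiff k) m d]
    rw [show (fun x => P i x * P k x) = (fun _ => (0 : H →L[ℂ] H)) from funext mulik]
    simp
  have r2 : ∀ d, P k m * fderiv ℝ (P i) m d + fderiv ℝ (P k) m d * P i m = 0 := by
    intro d
    rw [← fd_mul (P k) (P i) (hPdiff k) (hPdiff i) m d]
    rw [show (fun x => P k x * P i x) = (fun _ => (0 : H →L[ℂ] H)) from funext mulki]
    simp
  have r3 : ∀ d, P i m * fderiv ℝ (P i) m d + fderiv ℝ (P i) m d * P i m
      = fderiv ℝ (P i) m d := by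
    intro d
    rw [← fd_mul (P i) (P i) (hPdiff i) (hPdiff i) m d]
    rw [show (fun x => P i x * P i x) = P i from funext mulii]
  have r4 : ∀ d, P k m * fderiv ℝ (P k) m d + fderiv ℝ (P k) m d * P k m
      = fderiv ℝ (P k) m d := by
    intro d
    rw [← fd_mul (P k) (P k) (hPdiff k) (hPdiff k) m d]
    rw [show (fun x => P k x * P k x) = P k from funext mulkk]
  intro u v w
  exact main_alg (P i m) (P k m) (fun d => fderiv ℝ (P i) m d)
    (fun d => fderiv ℝ (P k) m d) (mulii m) (mulkk m) (mulik m) (mulki m)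
    r1 r2 r3 r4 u v w
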